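/- Let S be a t-conorm continuous in its first coordinate, and X a set with at least two elements. Suppose there exist w, s, t ∈ [0,1] with s ≠ t and S(t,w) = S(s,w) > w. Then there exists a fuzzy binary relation R on X admitting two distinct weak decompositions (P,I) and (P',I) with respect to S such that both triplets (R,P,I) and (R,P',I) are fuzzy preferences. -/

import Mathlib

structure Tconorm where
  S : unitInterval → unitInterval → unitInterval
  comm : ∀ a b, S a b = S b a
  assoc : ∀ a b c, S a (S b c) = S (S a b) c
  mono : ∀ a b c d, a ≤ c → b ≤ d → S a b ≤ S c d
  S_zero : ∀ a, S a 0 = a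
  S_one : ∀ a, S a 1 = 1

structure Tnorm where
  T : unitInterval → unitInterval → unitInterval
  comm : ∀ a b, T a b = T b a
  assoc : ∀ a b c, T a (T b c) = T (T a b) c
  mono : ∀ a b c d, a ≤ c → b ≤ d → T a b ≤ T c d
  T_one : ∀ a, T a 1 = a
  T_zero : ∀ a, T a 0 = 0

/-- A fuzzy binary relation `P` is asymmetric. -/
def FAsymm {X : Type*} (P : X → X → unitInterval) : Prop :=
  ∀ x y, 0 < P x y → P y x = 0

/-- A fuzzy binary relation `I` is symmetric. -/
def FSymm {X : Type*} (I : X → X → unitInterval) : Prop :=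
  ∀ x y, I x y = I y x

/-- `(P, I)` is a weak decomposition of `R` with respect to the t-conorm `S`. -/
def IsWeakDecomp {X : Type*} (S : Tconorm) (R P I : X → X → unitInterval) : Prop :=
  FAsymm P ∧ FSymm I ∧ (∀ x y, R x y = S.S (P x y) (I x y)) ∧
    ∀ x y, I x y = 1 → P x y = 0

/-- `(P, I)` is a strong decomposition of `R` with respect to `(T, S)`. -/
def IsStrongDecomp {X : Type*} (T : Tnorm) (S : Tconorm)
    (R P I : X → X → unitInterval) : Prop :=
  FAsymm P ∧ FSymm I ∧ (∀ x y, R x y = S.S (P x y) (I x y)) ∧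
    ∀ x y, T.T (P x y) (I x y) = 0

/-- The triplet `(R, P, I)` is a fuzzy preference (FP1–FP6). -/
def IsFuzzyPref {X : Type*} (R P I : X → X → unitInterval) : Prop :=
  (∀ x y, 0 < P x y → P y x = 0) ∧
  (∀ x y, I x y = I y x) ∧
  (∀ x y, P x y ≤ R x y) ∧
  (∀ x y, R y x < R x y ↔ 0 < P x y) ∧
  (∀ x y, P x y = 0 → R x y = I x y) ∧
  (∀ x y z w, I x y ≤ I z w → P x y ≤ P z w → R x y ≤ R z w)

/-!
Take the constant indifference `I ≡ w` and let `R` equal `w` except at one pair `x₀ ≠ y₀`, where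
`R x₀ y₀ = S(t, w)`. A strict preference concentrated at `(x₀, y₀)` with value `p` decomposes `R`
exactly when `S(p, w) = S(t, w)`, so `p = t` and `p = s` both work; every axiom of a weak
decomposition and of a fuzzy preference then reduces to `w < S(p, w)`.
-/

namespace Tconorm

variable (S : Tconorm)

theorem S_zero_left (a : unitInterval) : S.S 0 a = a := by
  rw [S.comm, S.S_zero]

theorem le_S_left (a b : unitInterval) : a ≤ S.S a b :=
  calc a = S.S a 0 := (S.S_zero a).symm
    _ ≤ S.S a b := S.mono _ _ _ _ le_rfl unitInterval.nonneg'

theorem pos_of_lt_S {a w : unitInterval} (h : w < S.S a w) : 0 < a := by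
  refine unitInterval.nonneg'.lt_of_ne fun ha => h.ne ?_
  rw [← ha, S_zero_left]

end Tconorm

section singleRel

variable {X : Type*} {x₀ y₀ : X}

open Classical in
noncomputable def singleRel (x₀ y₀ : X) (a b : unitInterval) : X → X → unitInterval :=
  fun x y => if x = x₀ ∧ y = y₀ then a else b

@[simp]
theorem singleRel_self (a b : unitInterval) : singleRel x₀ y₀ a b x₀ y₀ = a := by
  simp [singleRel]

theorem singleRel_of_ne {x y : X} (h : ¬(x = x₀ ∧ y = y₀)) (a b : unitInterval) :
    singleRel x₀ y₀ a b x y = b := if_neg h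

theorem singleRel_swap_of_ne (hxy : x₀ ≠ y₀) (a b : unitInterval) :
    singleRel x₀ y₀ a b y₀ x₀ = b :=
  singleRel_of_ne (fun h => hxy h.2) a b

theorem le_singleRel {a b : unitInterval} (hba : b ≤ a) (x y : X) :
    b ≤ singleRel x₀ y₀ a b x y := by
  unfold singleRel; split_ifs <;> simp [hba]

theorem eq_of_singleRel_pos {p : unitInterval} {x y : X}
    (h : 0 < singleRel x₀ y₀ p 0 x y) : x = x₀ ∧ y = y₀ := by
  by_contra hne
  rw [singleRel_of_ne hne] at h
  exact h.false

theorem fAsymm_singleRel (hxy : x₀ ≠ y₀) (p : unitInterval) : FAsymm (singleRel x₀ y₀ p 0) := by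
  intro x y h
  obtain ⟨rfl, rfl⟩ := eq_of_singleRel_pos h
  exact singleRel_swap_of_ne hxy p 0

variable (S : Tconorm) {p w : unitInterval}

theorem singleRel_eq_S (x y : X) :
    singleRel x₀ y₀ (S.S p w) w x y = S.S (singleRel x₀ y₀ p 0 x y) w := by
  unfold singleRel; split_ifs <;> simp [S.S_zero_left]

theorem isWeakDecomp_singleRel (hxy : x₀ ≠ y₀) (hw : w < S.S p w) :
    IsWeakDecomp S (singleRel x₀ y₀ (S.S p w) w) (singleRel x₀ y₀ p 0) fun _ _ => w := by
  refine ⟨fAsymm_singleRel hxy p, fun _ _ => rfl, singleRel_eq_S S, fun _ _ hw1 => ?_⟩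
  exact absurd (hw.trans_le unitInterval.le_one') (by simp [hw1])

theorem isFuzzyPref_singleRel (hxy : x₀ ≠ y₀) (hw : w < S.S p w) :
    IsFuzzyPref (singleRel x₀ y₀ (S.S p w) w) (singleRel x₀ y₀ p 0) fun _ _ => w := by
  have hp := S.pos_of_lt_S hw
  have hwR := le_singleRel (x₀ := x₀) (y₀ := y₀) hw.le
  refine ⟨fAsymm_singleRel hxy p, fun _ _ => rfl, fun x y => ?_, fun x y => ?_,
    fun x y hP => ?_, fun a b c d _ hP => ?_⟩
  · rw [singleRel_eq_S]; exact S.le_S_left _ _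
  · by_cases hx : x = x₀ ∧ y = y₀
    · obtain ⟨rfl, rfl⟩ := hx
      simp [singleRel_swap_of_ne hxy, hw, hp]
    · rw [singleRel_of_ne hx, singleRel_of_ne hx]
      simpa using hwR y x
  · rw [singleRel_eq_S, hP, S.S_zero_left]
  · by_cases hab : a = x₀ ∧ b = y₀
    · obtain ⟨rfl, rfl⟩ := hab
      rw [singleRel_self] at hP
      obtain ⟨rfl, rfl⟩ := eq_of_singleRel_pos (hp.trans_le hP)
      exact le_rfl
    · rw [singleRel_of_ne hab]; exact hwR c d

end singleRel

theorem non_unique_preference_decompositions_general {X : Type*} (hX : ∃ x y : X, x ≠ y)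
    (S : Tconorm)
    (h : ∃ w s t : unitInterval, s ≠ t ∧ S.S t w = S.S s w ∧ w < S.S t w) :
    ∃ R P P' I : X → X → unitInterval, P ≠ P' ∧
      IsWeakDecomp S R P I ∧ IsWeakDecomp S R P' I ∧
      IsFuzzyPref R P I ∧ IsFuzzyPref R P' I := by
  obtain ⟨x₀, y₀, hxy⟩ := hX
  obtain ⟨w, s, t, hst, hts, hw⟩ := h
  have hw' : w < S.S s w := hts ▸ hw
  refine ⟨singleRel x₀ y₀ (S.S t w) w, singleRel x₀ y₀ t 0, singleRel x₀ y₀ s 0, fun _ _ => w,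
    fun hP => hst ?_, isWeakDecomp_singleRel S hxy hw, ?_, isFuzzyPref_singleRel S hxy hw, ?_⟩
  · simpa using (congrFun (congrFun hP x₀) y₀).symm
  · rw [hts]; exact isWeakDecomp_singleRel S hxy hw'
  · rw [hts]; exact isFuzzyPref_singleRel S hxy hw'

/-- If `S` is continuous in the first coordinate and there are `w, s, t` with `s ≠ t` and
`S(t,w) = S(s,w) > w`, then some fuzzy binary relation admits two distinct weak
decompositions both inducing fuzzy preferences. -/
theorem non_unique_preference_decompositions {X : Type*} (hX : ∃ x y : X, x ≠ y)
    (S : Tconorm) (hc : ∀ b, Continuous fun a => S.S a b)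
    (h : ∃ w s t : unitInterval, s ≠ t ∧ S.S t w = S.S s w ∧ w < S.S t w) :
    ∃ R P P' I : X → X → unitInterval, P ≠ P' ∧
      IsWeakDecomp S R P I ∧ IsWeakDecomp S R P' I ∧
      IsFuzzyPref R P I ∧ IsFuzzyPref R P' I :=
  non_unique_preference_decompositions_general hX S h
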